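/- arXiv:1611.03939 — 3 statements merged into one kernel-verified Lean document; each statement's English description precedes it below -/
import Mathlib

section
/- Let κ > 1, 0 < b < 1, ê₀ ≥ 0, and let P be a polynomial with non-negative coefficients. Suppose e_j ≤ ê₀ b^(κ^j−1), L_j ≤ e^(P(j)), and a_j ≥ 0 satisfies a_{j+1} ≤ L_j e_j a_j for all j ≥ 0. Then for any b₁ with b₁ > b^(1/(κ−1)) there is a constant C, depending only on ê₀, b, b₁ and P, such that a_j ≤ C · a_0 · b₁^(κ^j) for all j ≥ 0. -/
open Filter Real Finset Topology

private lemma poly_mono_aux {P : Polynomial ℝ} (hP : ∀ i, 0 ≤ P.coeff i) {x y : ℝ}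
    (hx : 0 ≤ x) (hxy : x ≤ y) : P.eval x ≤ P.eval y := by
  rw [Polynomial.eval_eq_sum_range, Polynomial.eval_eq_sum_range]
  refine Finset.sum_le_sum fun i _ => ?_
  exact mul_le_mul_of_nonneg_left (pow_le_pow_left₀ hx hxy i) (hP i)

private lemma poly_add_geo_atBot (κ c : ℝ) (hκ : 1 < κ) (hc : c < 0) (Q : Polynomial ℝ) :
    Tendsto (fun j : ℕ => Q.eval (j : ℝ) + c * κ ^ j) atTop atBot := by
  have hκ0 : (0:ℝ) < κ := by linarith
  have hκj : ∀ j : ℕ, (0:ℝ) < κ ^ j := fun j => pow_pos hκ0 j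
  have hlog : 0 < Real.log κ := Real.log_pos hκ
  set R : Polynomial ℝ := Q.comp (Polynomial.C (Real.log κ)⁻¹ * Polynomial.X) with hR
  have hx : Tendsto (fun j : ℕ => (j : ℝ) * Real.log κ) atTop atTop :=
    Tendsto.atTop_mul_const hlog tendsto_natCast_atTop_atTop
  have T2 : Tendsto (fun j : ℕ => Q.eval (j:ℝ) / κ ^ j) atTop (𝓝 0) := by
    have h := (R.tendsto_div_exp_atTop).comp hx
    refine h.congr fun j => ?_
    simp only [Function.comp_apply, hR, Polynomial.eval_comp, Polynomial.eval_mul,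
      Polynomial.eval_C, Polynomial.eval_X]
    rw [Real.exp_nat_mul, Real.exp_log hκ0]
    congr 1
    congr 1
    field_simp
  have T1 : Tendsto (fun j : ℕ => κ ^ j) atTop atTop := tendsto_pow_atTop_atTop_of_one_lt hκ
  have T3 : Tendsto (fun j : ℕ => Q.eval (j:ℝ) / κ ^ j + c) atTop (𝓝 (0 + c)) :=
    T2.add_const c
  rw [zero_add] at T3
  have T4 := Filter.Tendsto.atTop_mul_neg hc T1 T3
  refine T4.congr fun j => ?_
  field_simp

/-- If `e_j ≤ ê₀ b^(κ^j−1)`, `L_j ≤ e^(P(j))` and `a_{j+1} ≤ L_j e_j a_j`, then for any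
`b₁ > b^(1/(κ−1))` there is `C`, depending only on `ê₀, b, b₁, κ` and `P`, such that
`a_j ≤ C a_0 b₁^(κ^j)` for all `j`. -/
theorem rapid_convergence_of_products (κ b e0 b1 : ℝ) (hκ : 1 < κ) (hb0 : 0 < b)
    (hb1 : b < 1) (he0 : 0 ≤ e0) (P : Polynomial ℝ) (hP : ∀ i, 0 ≤ P.coeff i)
    (hb1' : b ^ (1 / (κ - 1)) < b1) :
    ∃ C : ℝ, 0 < C ∧ ∀ e L a : ℕ → ℝ,
      (∀ j : ℕ, 0 ≤ e j ∧ e j ≤ e0 * b ^ (κ ^ j - 1)) →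
      (∀ j : ℕ, 0 ≤ L j ∧ L j ≤ Real.exp (P.eval (j : ℝ))) →
      (∀ j, 0 ≤ a j) →
      (∀ j : ℕ, a (j + 1) ≤ L j * e j * a j) →
      ∀ j : ℕ, a j ≤ C * a 0 * b1 ^ (κ ^ j) := by
  have hκ1 : (0:ℝ) < κ - 1 := by linarith
  have hbr : 0 < b ^ (1 / (κ - 1)) := Real.rpow_pos_of_pos hb0 _
  have hb1pos : 0 < b1 := lt_trans hbr hb1'
  set E : ℝ := max e0 1 with hE
  have hE1 : (1:ℝ) ≤ E := le_max_right _ _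
  have hEpos : 0 < E := by linarith
  set r : ℝ := b ^ (1 / (κ - 1)) / b1 with hrdef
  have hr0 : 0 < r := div_pos hbr hb1pos
  have hr1 : r < 1 := (div_lt_one hb1pos).2 hb1'
  set M : ℝ := E / b with hMdef
  have hM : 0 < M := div_pos hEpos hb0
  set S : ℕ → ℝ := fun j => ∑ i ∈ Finset.range j, P.eval (i : ℝ) with hS
  set G : ℕ → ℝ := fun j => Real.exp (S j) * M ^ j * r ^ (κ ^ j) with hG
  -- G tends to 0
  have hGeq : ∀ j : ℕ, G j = Real.exp (S j + j * Real.log M + Real.log r * κ ^ j) := by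
    intro j
    rw [Real.exp_add, Real.exp_add, Real.exp_nat_mul, Real.exp_log hM,
      ← Real.rpow_def_of_pos hr0]
  have hlogr : Real.log r < 0 := Real.log_neg hr0 hr1
  have hSle : ∀ j : ℕ, S j ≤ j * P.eval (j:ℝ) := by
    intro j
    calc S j ≤ ∑ _i ∈ Finset.range j, P.eval (j:ℝ) :=
          Finset.sum_le_sum fun i hi => poly_mono_aux hP (Nat.cast_nonneg i)
            (Nat.cast_le.2 (Finset.mem_range.1 hi).le)
      _ = j * P.eval (j:ℝ) := by rw [Finset.sum_const, Finset.card_range, nsmul_eq_mul]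
  have hbot := poly_add_geo_atBot κ (Real.log r) hκ hlogr
    (Polynomial.X * P + Polynomial.C (Real.log M) * Polynomial.X)
  have hbot2 : Tendsto (fun j : ℕ => S j + j * Real.log M + Real.log r * κ ^ j)
      atTop atBot := by
    refine tendsto_atBot_mono (fun j => ?_) hbot
    simp only [Polynomial.eval_add, Polynomial.eval_mul, Polynomial.eval_X, Polynomial.eval_C]
    have h1 := hSle j
    have h2 : (j:ℝ) * Real.log M = Real.log M * (j:ℝ) := mul_comm _ _
    linarith
  have hG0 : Tendsto G atTop (𝓝 0) := by
    have h := Real.tendsto_exp_atBot.comp hbot2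
    exact Tendsto.congr (fun j => (hGeq j).symm) h
  obtain ⟨C0, hC0⟩ := hG0.bddAbove_range
  set C1 : ℝ := max C0 1 with hC1
  have hC1pos : (0:ℝ) < C1 := lt_of_lt_of_le one_pos (le_max_right _ _)
  have hGle : ∀ j, G j ≤ C1 := fun j =>
    le_trans (hC0 (Set.mem_range_self j)) (le_max_left _ _)
  set B : ℝ := b ^ (-(1 / (κ - 1))) with hB
  have hBpos : 0 < B := Real.rpow_pos_of_pos hb0 _
  refine ⟨B * C1, mul_pos hBpos hC1pos, ?_⟩
  intro e L a he hL ha hrec j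
  -- step 1: a j ≤ a 0 * ∏
  have key : ∀ j : ℕ, a j ≤ a 0 * ∏ i ∈ Finset.range j, (L i * e i) := by
    intro j
    induction j with
    | zero => simp
    | succ n ih =>
      calc a (n+1) ≤ L n * e n * a n := hrec n
        _ ≤ L n * e n * (a 0 * ∏ i ∈ Finset.range n, (L i * e i)) :=
            mul_le_mul_of_nonneg_left ih (mul_nonneg (hL n).1 (he n).1)
        _ = a 0 * ∏ i ∈ Finset.range (n+1), (L i * e i) := by
            rw [Finset.prod_range_succ]; ring
  -- step 2: bound the product
  have prod_le : ∏ i ∈ Finset.range j, (L i * e i)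
      ≤ Real.exp (S j) * E ^ j * b ^ (∑ i ∈ Finset.range j, (κ ^ i - 1)) := by
    have step : ∏ i ∈ Finset.range j, (L i * e i)
        ≤ ∏ i ∈ Finset.range j, (Real.exp (P.eval (i:ℝ)) * (E * b ^ (κ ^ i - 1))) := by
      refine Finset.prod_le_prod (fun i _ => mul_nonneg (hL i).1 (he i).1) fun i _ => ?_
      have hei : e i ≤ E * b ^ (κ ^ i - 1) :=
        le_trans (he i).2 (mul_le_mul_of_nonneg_right (le_max_left e0 1)
          (Real.rpow_nonneg hb0.le _))
      exact mul_le_mul (hL i).2 hei (he i).1 (Real.exp_pos _).le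
    refine le_trans step (le_of_eq ?_)
    rw [Finset.prod_mul_distrib, Finset.prod_mul_distrib, ← Real.exp_sum,
      Finset.prod_const, Finset.card_range, Real.rpow_sum_of_pos hb0]
    simp only [hS]
    ring
  -- step 3: rewrite the rpow
  have hsum : ∑ i ∈ Finset.range j, (κ ^ i - 1) = (κ ^ j - 1)/(κ - 1) - j := by
    rw [Finset.sum_sub_distrib, geom_sum_eq hκ.ne', Finset.sum_const, Finset.card_range]
    simp [nsmul_eq_mul]
  have hbexp : Real.exp (S j) * E ^ j * b ^ (∑ i ∈ Finset.range j, (κ ^ i - 1))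
      = B * G j * b1 ^ (κ ^ j) := by
    rw [hsum]
    have e1 : (κ ^ j - 1)/(κ - 1) - (j:ℝ)
        = (1 / (κ - 1)) * κ ^ j + (-(1 / (κ - 1))) + (-(j:ℝ)) := by
      field_simp
      ring
    have e2 : (b ^ (1 / (κ - 1))) = r * b1 := by
      rw [hrdef]; field_simp
    have e3 : b ^ (-(j:ℝ)) = ((b ^ j : ℝ))⁻¹ := by
      rw [Real.rpow_neg hb0.le, Real.rpow_natCast]
    have e4 : b ^ (-(1 / (κ - 1))) = (b ^ (1 / (κ - 1)))⁻¹ := Real.rpow_neg hb0.le _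
    rw [e1, Real.rpow_add hb0, Real.rpow_add hb0, Real.rpow_mul hb0.le, e2,
      Real.mul_rpow hr0.le hb1pos.le, e3, e4]
    simp only [hG, hB, hMdef, e4, div_pow]
    have hbj : (b:ℝ) ^ j ≠ 0 := (pow_pos hb0 j).ne'
    have hbk : b ^ (1 / (κ - 1)) ≠ 0 := hbr.ne'
    field_simp
  -- conclude
  have hb1j : (0:ℝ) < b1 ^ (κ ^ j) := Real.rpow_pos_of_pos hb1pos _
  have hfinal : a j ≤ a 0 * (B * G j * b1 ^ (κ ^ j)) := by
    refine le_trans (key j) (mul_le_mul_of_nonneg_left ?_ (ha 0))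
    rw [← hbexp]; exact prod_le
  refine le_trans hfinal ?_
  have hGj : G j ≤ C1 := hGle j
  have : a 0 * (B * G j * b1 ^ (κ ^ j)) ≤ a 0 * (B * C1 * b1 ^ (κ ^ j)) := by
    refine mul_le_mul_of_nonneg_left ?_ (ha 0)
    refine mul_le_mul_of_nonneg_right (mul_le_mul_of_nonneg_left hGj hBpos.le) hb1j.le
  refine le_trans this (le_of_eq ?_)
  ring
end

section
/- Let P be a polynomial with non-negative coefficients, K_j ≥ 0 with K_j ≤ e^(P(j)), and let κ₁ > κ > 1. Define C*_j = exp( κ^{-1}(ln 2 + P(0)) + Σ_{m=1}^{j} κ^{-m}(ln 2 + P(m)) ) and C*_∞ = lim_{j→∞} C*_j (which is finite). Suppose the sequence a_j ≥ 0 satisfies a_{j+1} ≤ K_j (a_j^κ + a_j^{κ₁}) for all j ≥ 0. If 0 ≤ C*_∞ · a_0 ≤ 1, then a_{j+1} ≤ (C*_∞ a_0)^(κ^j) for all j ≥ 0. -/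
/-!
Since `C*_∞ a₀ ≤ 1` every iterate stays in `[0, 1]`, where `a^{κ₁} ≤ a^κ`, so the recursion
collapses to `a_{j+1} ≤ e^{L_j} a_j^κ` with `L_j = ln 2 + P(j) ≥ 0`. Writing `S_j` for the exponent
of `C*_j`, induction gives `a_{j+1} ≤ (e^{S_j} a₀)^{κ^{j+1}}`: the new factor `e^{L_{j+1}}` is absorbed
because `(e^{κ^{-(j+1)} L_{j+1}})^{κ^{j+2}} = e^{κ L_{j+1}} ≥ e^{L_{j+1}}`. Finally `e^{S_j} ≤ C*_∞`
and `C*_∞ a₀ ≤ 1` allow lowering the exponent from `κ^{j+1}` to `κ^j`.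
-/

open Real Finset Filter

theorem Polynomial.eval_nonneg_of_coeff_nonneg {R : Type*} [Semiring R] [PartialOrder R]
    [IsOrderedRing R] {p : Polynomial R} (hp : ∀ i, 0 ≤ p.coeff i) {x : R} (hx : 0 ≤ x) :
    0 ≤ p.eval x := by
  rw [Polynomial.eval_eq_sum_range]
  exact sum_nonneg fun i _ => mul_nonneg (hp i) (pow_nonneg hx i)

theorem Real.rpow_add_rpow_le_two_mul_rpow {x κ κ₁ : ℝ} (hx₀ : 0 ≤ x) (hx₁ : x ≤ 1)
    (hκ : 0 ≤ κ) (hκκ₁ : κ ≤ κ₁) : x ^ κ + x ^ κ₁ ≤ 2 * x ^ κ := by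
  linarith [rpow_le_rpow_of_exponent_ge' hx₀ hx₁ hκ hκκ₁]

/-- The exponent of `C*_j`, for a general weight sequence `L` in place of `m ↦ ln 2 + P(m)`. -/
noncomputable def kamExponent (κ : ℝ) (L : ℕ → ℝ) (j : ℕ) : ℝ :=
  κ⁻¹ * L 0 + ∑ m ∈ Icc 1 j, κ ^ (-(m : ℝ)) * L m

section kamExponent

variable {κ : ℝ} {L : ℕ → ℝ}

theorem kamExponent_zero : kamExponent κ L 0 = κ⁻¹ * L 0 := by
  simp [kamExponent]

theorem kamExponent_succ (j : ℕ) :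
    kamExponent κ L (j + 1) = kamExponent κ L j + κ ^ (-((j + 1 : ℕ) : ℝ)) * L (j + 1) := by
  rw [kamExponent, kamExponent, sum_Icc_succ_top (by omega), add_assoc]

theorem monotone_kamExponent (hκ : 0 ≤ κ) (hL : ∀ m, 0 ≤ L m) : Monotone (kamExponent κ L) :=
  monotone_nat_of_le_succ fun j => by
    rw [kamExponent_succ]
    exact le_add_of_nonneg_right (mul_nonneg (rpow_nonneg hκ _) (hL _))

theorem kamExponent_nonneg (hκ : 0 ≤ κ) (hL : ∀ m, 0 ≤ L m) (j : ℕ) : 0 ≤ kamExponent κ L j :=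
  calc 0 ≤ kamExponent κ L 0 := by rw [kamExponent_zero]; exact mul_nonneg (inv_nonneg.2 hκ) (hL 0)
    _ ≤ kamExponent κ L j := monotone_kamExponent hκ hL (Nat.zero_le j)

theorem exp_mul_rpow_le_exp_kamExponent_succ_mul_rpow (hκ : 1 ≤ κ) (hL : ∀ m, 0 ≤ L m)
    {x : ℝ} (hx : 0 ≤ x) (j : ℕ) :
    exp (L (j + 1)) * (exp (kamExponent κ L j) * x) ^ κ ^ (j + 2)
      ≤ (exp (kamExponent κ L (j + 1)) * x) ^ κ ^ (j + 2) := by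
  have hκ₀ : 0 < κ := by linarith
  have hmul : κ ^ (-((j + 1 : ℕ) : ℝ)) * κ ^ (j + 2) = κ := by
    rw [rpow_neg hκ₀.le, rpow_natCast]
    field_simp
    ring
  have hgain : exp (L (j + 1)) ≤ exp (κ ^ (-((j + 1 : ℕ) : ℝ)) * L (j + 1)) ^ κ ^ (j + 2) := by
    rw [← exp_mul, mul_right_comm, hmul, exp_le_exp]
    exact le_mul_of_one_le_left (hL _) hκ
  rw [kamExponent_succ, exp_add, mul_right_comm,
    mul_rpow (mul_nonneg (exp_nonneg _) hx) (exp_nonneg _), mul_comm]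
  exact mul_le_mul_of_nonneg_left hgain (rpow_nonneg (mul_nonneg (exp_nonneg _) hx) _)

theorem le_rpow_of_le_exp_mul_rpow (hκ : 1 ≤ κ) (hL : ∀ m, 0 ≤ L m) {a : ℕ → ℝ}
    (ha₀ : ∀ j, 0 ≤ a j) (ha : ∀ j, a j ≤ 1 → a (j + 1) ≤ exp (L j) * a j ^ κ)
    (hsmall : ∀ j, exp (kamExponent κ L j) * a 0 ≤ 1) (j : ℕ) :
    a (j + 1) ≤ (exp (kamExponent κ L j) * a 0) ^ κ ^ (j + 1) := by
  have hκ₀ : 0 < κ := by linarith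
  have hx : ∀ j, 0 ≤ exp (kamExponent κ L j) * a 0 := fun j => mul_nonneg (exp_nonneg _) (ha₀ 0)
  induction j with
  | zero =>
    have ha₀₁ : a 0 ≤ 1 :=
      le_trans (le_mul_of_one_le_left (ha₀ 0) (one_le_exp (kamExponent_nonneg hκ₀.le hL 0)))
        (hsmall 0)
    rw [zero_add, pow_one, mul_rpow (exp_nonneg _) (ha₀ 0), ← exp_mul, kamExponent_zero,
      mul_comm κ⁻¹, inv_mul_cancel_right₀ hκ₀.ne']
    exact ha 0 ha₀₁
  | succ j ih =>
    have ha₁ : a (j + 1) ≤ 1 := ih.trans (rpow_le_one (hx j) (hsmall j) (by positivity))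
    calc a (j + 1 + 1) ≤ exp (L (j + 1)) * a (j + 1) ^ κ := ha (j + 1) ha₁
      _ ≤ exp (L (j + 1)) * ((exp (kamExponent κ L j) * a 0) ^ κ ^ (j + 1)) ^ κ :=
        mul_le_mul_of_nonneg_left (rpow_le_rpow (ha₀ _) ih hκ₀.le) (exp_nonneg _)
      _ = exp (L (j + 1)) * (exp (kamExponent κ L j) * a 0) ^ κ ^ (j + 2) := by
        rw [← rpow_mul (hx j), ← pow_succ]
      _ ≤ (exp (kamExponent κ L (j + 1)) * a 0) ^ κ ^ (j + 1 + 1) :=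
        exp_mul_rpow_le_exp_kamExponent_succ_mul_rpow hκ hL (ha₀ 0) j

end kamExponent

theorem kam_rapid_iteration_general (κ κ₁ : ℝ) (hκ : 1 < κ) (hκ₁ : κ < κ₁)
    (P : Polynomial ℝ) (hP : ∀ i, 0 ≤ P.coeff i)
    (K : ℕ → ℝ) (hK : ∀ j : ℕ, 0 ≤ K j ∧ K j ≤ Real.exp (P.eval (j : ℝ)))
    (a : ℕ → ℝ) (ha0 : ∀ j, 0 ≤ a j)
    (ha : ∀ j : ℕ, a (j + 1) ≤ K j * (a j ^ κ + a j ^ κ₁))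
    (Cinf : ℝ)
    (hC : Filter.Tendsto (fun j : ℕ => Real.exp (κ⁻¹ * (Real.log 2 + P.eval 0) +
        ∑ m ∈ Finset.Icc 1 j, κ ^ (-(m : ℝ)) * (Real.log 2 + P.eval (m : ℝ))))
      Filter.atTop (nhds Cinf))
    (hsmall : Cinf * a 0 ≤ 1) :
    ∀ j : ℕ, a (j + 1) ≤ (Cinf * a 0) ^ (κ ^ j) := by
  set L : ℕ → ℝ := fun m => log 2 + P.eval (m : ℝ)
  have hL : ∀ m, 0 ≤ L m := fun m =>
    add_nonneg (log_nonneg one_le_two) (P.eval_nonneg_of_coeff_nonneg hP m.cast_nonneg)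
  have hstep : ∀ j, a j ≤ 1 → a (j + 1) ≤ exp (L j) * a j ^ κ := fun j h₁ =>
    calc a (j + 1) ≤ K j * (a j ^ κ + a j ^ κ₁) := ha j
      _ ≤ exp (P.eval (j : ℝ)) * (2 * a j ^ κ) :=
        mul_le_mul (hK j).2 (rpow_add_rpow_le_two_mul_rpow (ha0 j) h₁ (by linarith) hκ₁.le)
          (add_nonneg (rpow_nonneg (ha0 j) _) (rpow_nonneg (ha0 j) _)) (exp_nonneg _)
      _ = exp (L j) * a j ^ κ := by rw [exp_add, exp_log two_pos]; ring
  have hC' : Tendsto (fun j => exp (kamExponent κ L j)) atTop (nhds Cinf) := by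
    simpa [kamExponent, L] using hC
  have hSC : ∀ j, exp (kamExponent κ L j) ≤ Cinf :=
    (exp_monotone.comp (monotone_kamExponent (by linarith) hL)).ge_of_tendsto hC'
  have hbase : ∀ j, exp (kamExponent κ L j) * a 0 ≤ Cinf * a 0 := fun j =>
    mul_le_mul_of_nonneg_right (hSC j) (ha0 0)
  have hC₀ : 0 ≤ Cinf * a 0 :=
    (mul_nonneg (exp_nonneg _) (ha0 0)).trans (hbase 0)
  intro j
  calc a (j + 1) ≤ (exp (kamExponent κ L j) * a 0) ^ κ ^ (j + 1) :=
        le_rpow_of_le_exp_mul_rpow hκ.le hL ha0 hstep (fun j => (hbase j).trans hsmall) j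
    _ ≤ (Cinf * a 0) ^ κ ^ (j + 1) :=
        rpow_le_rpow (mul_nonneg (exp_nonneg _) (ha0 0)) (hbase j) (by positivity)
    _ ≤ (Cinf * a 0) ^ κ ^ j :=
        rpow_le_rpow_of_exponent_ge' hC₀ hsmall (by positivity) (pow_le_pow_right₀ hκ.le j.le_succ)

/-- KAM rapid convergence: if `a_{j+1} ≤ K_j (a_j^κ + a_j^{κ₁})` with `κ₁ > κ > 1`,
`K_j ≤ e^(P(j))`, and `C*_∞ a_0 ≤ 1` where
`C*_∞ = lim_j exp(κ⁻¹(ln 2 + P(0)) + Σ_{m=1}^j κ^{-m}(ln 2 + P(m)))`,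
then `a_{j+1} ≤ (C*_∞ a_0)^(κ^j)` for all `j ≥ 0`. -/
theorem kam_rapid_iteration (κ κ₁ : ℝ) (hκ : 1 < κ) (hκ₁ : κ < κ₁)
    (P : Polynomial ℝ) (hP : ∀ i, 0 ≤ P.coeff i)
    (K : ℕ → ℝ) (hK : ∀ j : ℕ, 0 ≤ K j ∧ K j ≤ Real.exp (P.eval (j : ℝ)))
    (a : ℕ → ℝ) (ha0 : ∀ j, 0 ≤ a j)
    (ha : ∀ j : ℕ, a (j + 1) ≤ K j * (a j ^ κ + a j ^ κ₁))
    (Cinf : ℝ)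
    (hC : Filter.Tendsto (fun j : ℕ => Real.exp (κ⁻¹ * (Real.log 2 + P.eval 0) +
        ∑ m ∈ Finset.Icc 1 j, κ ^ (-(m : ℝ)) * (Real.log 2 + P.eval (m : ℝ))))
      Filter.atTop (nhds Cinf))
    (hnn : 0 ≤ Cinf * a 0) (hsmall : Cinf * a 0 ≤ 1) :
    ∀ j : ℕ, a (j + 1) ≤ (Cinf * a 0) ^ (κ ^ j) :=
  kam_rapid_iteration_general κ κ₁ hκ hκ₁ P hP K hK a ha0 ha Cinf hC hsmall
end

section
/- (Seeley extension bound.) There exist sequences (a_k), (b_k) of real numbers with b_k < 0, b_k → −∞, (−1)^k a_k > 0, Σ_k |a_k| |b_k|^n < ∞ for every n ∈ ℕ, and Σ_k a_k b_k^n = 1 for every n ∈ ℕ; consequently, for a smooth cutoff φ with φ(λ)=1 for λ<1 and φ(λ)=0 for λ>2, the operator (E f)(s) = Σ_{k=0}^∞ a_k φ(b_k s) f(b_k s) for s ≤ 0 (applied to functions f on [0, 1/2] vanishing near 1/2 and extended by f itself for s ≥ 0) defines a bounded linear extension operator from C^m([0,1]) to C^m functions on [−1, 2], with norm bounded by a constant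 depending only on m. -/
noncomputable section
open Finset Filter Topology
namespace SeeleyAux

/-- The nodes `v k = -2^k`. -/
def v (k : ℕ) : ℝ := -(2:ℝ)^k

/-- The individual factor in the Lagrange weight. -/
def fct (k j : ℕ) : ℝ := (1 + 2^j) / ((2:ℝ)^j - 2^k)

/-- Finite Lagrange weight: value at `1` of the `k`-th Lagrange basis polynomial
with nodes `v 0, …, v K`. -/
def W (K k : ℕ) : ℝ := ∏ j ∈ (range (K+1)).erase k, fct k j

/-- Dominating bound. -/
def M (k : ℕ) : ℝ := Real.exp 4 * ((2:ℝ)^k * ((2:ℝ)^(k.choose 2))⁻¹)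

lemma v_inj : Function.Injective v := by
  intro i j h
  have : (2:ℝ)^i = 2^j := by simpa [v, neg_inj] using h
  have h2 : StrictMono (fun n : ℕ => (2:ℝ)^n) := fun i j hij => pow_lt_pow_right₀ (by norm_num) hij
  exact h2.injective this

lemma eval_basis (K k : ℕ) :
    Polynomial.eval (1:ℝ) (Lagrange.basis (range (K+1)) v k) = W K k := by
  rw [Lagrange.basis, Polynomial.eval_prod]
  refine Finset.prod_congr rfl fun j _ => ?_
  simp only [Lagrange.basisDivisor, Polynomial.eval_mul, Polynomial.eval_C,
    Polynomial.eval_sub, Polynomial.eval_X, v, fct]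
  rw [div_eq_inv_mul]
  congr 1
  · congr 1; ring
  · ring

lemma lagrange_sum {n K : ℕ} (h : n ≤ K) :
    ∑ k ∈ range (K+1), v k ^ n * W K k = 1 := by
  have hvs : Set.InjOn v (range (K+1)) := v_inj.injOn
  have hdeg : (Polynomial.X ^ n : Polynomial ℝ).degree < (range (K+1)).card := by
    rw [Polynomial.degree_X_pow, Finset.card_range]
    exact_mod_cast Nat.lt_succ_of_le h
  have hint := Lagrange.eq_interpolate (v := v) hvs hdeg
  have := congrArg (Polynomial.eval (1:ℝ)) hint
  simp only [Polynomial.eval_pow, Polynomial.eval_X, one_pow, Lagrange.interpolate_apply,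
    Polynomial.eval_finset_sum, Polynomial.eval_mul, Polynomial.eval_C] at this
  rw [this]
  exact Finset.sum_congr rfl fun k hk => by rw [eval_basis]


lemma two_pow_pos (j : ℕ) : (0:ℝ) < 2^j := by positivity

lemma fct_neg {k j : ℕ} (h : j < k) : fct k j < 0 := by
  have h1 : (2:ℝ)^j < 2^k := pow_lt_pow_right₀ (by norm_num) h
  have : (0:ℝ) < 1 + 2^j := by positivity
  exact div_neg_of_pos_of_neg this (by linarith)

lemma fct_pos {k j : ℕ} (h : k < j) : 0 < fct k j := by
  have h1 : (2:ℝ)^k < 2^j := pow_lt_pow_right₀ (by norm_num) h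
  have : (0:ℝ) < 1 + 2^j := by positivity
  exact div_pos this (by linarith)

lemma one_le_fct {k j : ℕ} (h : k < j) : 1 ≤ fct k j := by
  have h1 : (2:ℝ)^k < 2^j := pow_lt_pow_right₀ (by norm_num) h
  rw [fct, le_div_iff₀ (by linarith)]
  have : (0:ℝ) < 2^k := two_pow_pos k
  linarith

/-- bound on the factors below the diagonal -/
lemma neg_fct_le {k j : ℕ} (h : j < k) :
    -fct k j ≤ 2^(j+2) * ((2:ℝ)^k)⁻¹ := by
  have h1 : (2:ℝ)^(j+1) ≤ 2^k := pow_le_pow_right₀ (by norm_num) h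
  have hj : (0:ℝ) < 2^j := two_pow_pos j
  have hk : (0:ℝ) < 2^k := two_pow_pos k
  have hd : (0:ℝ) < 2^k - 2^j := by
    have : (2:ℝ)^j < 2^(j+1) := by rw [pow_succ]; linarith
    linarith
  have hne : -fct k j = (1 + 2^j) / ((2:ℝ)^k - 2^j) := by
    have e : (2:ℝ)^j - 2^k = -((2:ℝ)^k - 2^j) := by ring
    rw [fct, e, div_neg, neg_neg]
  rw [hne, div_le_iff₀ hd]
  have e1 : (1:ℝ) + 2^j ≤ 2^(j+1) := by rw [pow_succ]; linarith [one_le_pow₀ (a := (2:ℝ)) (n := j) (by norm_num)]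
  have e2 : (2:ℝ)^k - 2^j ≥ 2^k / 2 := by
    rw [ge_iff_le, div_le_iff₀ (by norm_num)]
    have : (2:ℝ)^(j+1) ≤ 2^k := h1
    rw [pow_succ] at this
    nlinarith
  calc (1:ℝ) + 2^j ≤ 2^(j+1) := e1
    _ = 2^(j+2) * ((2:ℝ)^k)⁻¹ * (2^k/2) := by
        rw [pow_succ, pow_succ]
        field_simp
        ring
    _ ≤ 2^(j+2) * ((2:ℝ)^k)⁻¹ * (2^k - 2^j) := by
        have : (0:ℝ) < 2^(j+2) * ((2:ℝ)^k)⁻¹ := by positivity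
        nlinarith

/-- bound on the factors above the diagonal -/
lemma fct_le_exp {k j : ℕ} (h : k < j) :
    fct k j ≤ Real.exp (2^(k+2) * ((2:ℝ)^j)⁻¹) := by
  have h1 : (2:ℝ)^(k+1) ≤ 2^j := pow_le_pow_right₀ (by norm_num) h
  have hk : (0:ℝ) < 2^k := two_pow_pos k
  have hj : (0:ℝ) < 2^j := two_pow_pos j
  have hd : (0:ℝ) < 2^j - 2^k := by rw [pow_succ] at h1; linarith
  have key : fct k j ≤ 1 + 2^(k+2) * ((2:ℝ)^j)⁻¹ := by
    rw [fct, div_le_iff₀ hd]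
    have e : (2:ℝ)^(k+2) = 4 * 2^k := by ring
    have e1 : (2:ℝ)^(k+1) = 2 * 2^k := by ring
    rw [e]
    have h2 : 2 * (2:ℝ)^k ≤ 2^j := by rw [e1] at h1; exact h1
    have hone : (1:ℝ) ≤ 2^k := one_le_pow₀ (by norm_num)
    have hexp : (1 + 4 * (2:ℝ)^k * ((2:ℝ)^j)⁻¹) * ((2:ℝ)^j - 2^k)
        = 2^j + 3 * 2^k - 4 * ((2:ℝ)^k)^2 * ((2:ℝ)^j)⁻¹ := by
      field_simp
      ring
    rw [hexp]
    have hinvle : ((2:ℝ)^j)⁻¹ ≤ (2 * (2:ℝ)^k)⁻¹ := by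
      apply inv_anti₀ (by positivity) h2
    have h4 : 4 * ((2:ℝ)^k)^2 * ((2:ℝ)^j)⁻¹ ≤ 2 * 2^k := by
      have := mul_le_mul_of_nonneg_left hinvle (by positivity : (0:ℝ) ≤ 4 * ((2:ℝ)^k)^2)
      have e2 : 4 * ((2:ℝ)^k)^2 * (2 * (2:ℝ)^k)⁻¹ = 2 * 2^k := by
        field_simp; ring
      linarith [this, e2.le, e2.ge]
    linarith
  calc fct k j ≤ 1 + 2^(k+2) * ((2:ℝ)^j)⁻¹ := key
    _ ≤ Real.exp (2^(k+2) * ((2:ℝ)^j)⁻¹) := by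
        have := Real.add_one_le_exp (2^(k+2) * ((2:ℝ)^j)⁻¹)
        linarith

lemma erase_range_split {K k : ℕ} (h : k ≤ K) :
    (range (K+1)).erase k = range k ∪ Ico (k+1) (K+1) := by
  ext j
  simp only [mem_erase, mem_range, mem_union, mem_Ico]
  omega

lemma W_split {K k : ℕ} (h : k ≤ K) :
    W K k = (∏ j ∈ range k, fct k j) * ∏ j ∈ Ico (k+1) (K+1), fct k j := by
  rw [W, erase_range_split h, Finset.prod_union]
  rw [Finset.disjoint_left]
  intro j hj hj'
  simp only [mem_range] at hj
  simp only [mem_Ico] at hj'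
  omega

lemma signedW {K k : ℕ} (h : k ≤ K) :
    (-1:ℝ)^k * W K k
      = (∏ j ∈ range k, (-fct k j)) * ∏ j ∈ Ico (k+1) (K+1), fct k j := by
  rw [W_split h]
  have : ∏ j ∈ range k, (-fct k j) = (∏ _j ∈ range k, (-1:ℝ)) * ∏ j ∈ range k, fct k j := by
    rw [← Finset.prod_mul_distrib]
    exact Finset.prod_congr rfl fun j _ => by ring
  rw [this, Finset.prod_const, Finset.card_range]; ring

lemma signedW_pos {K k : ℕ} (h : k ≤ K) : 0 < (-1:ℝ)^k * W K k := by
  rw [signedW h]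
  apply mul_pos
  · exact Finset.prod_pos fun j hj => by
      have := fct_neg (mem_range.mp hj); linarith
  · exact Finset.prod_pos fun j hj => fct_pos (by simpa using (mem_Ico.mp hj).1)

lemma natarith (k : ℕ) : (∑ j ∈ range k, (j+2)) + k.choose 2 = k + k*k := by
  induction k with
  | zero => simp
  | succ k ih =>
      have hc : (k+1).choose 2 = k + k.choose 2 := by
        rw [Nat.choose_succ_succ, Nat.choose_one_right]
      have hsq : (k+1)*(k+1) = k*k + 2*k + 1 := by ring
      rw [Finset.sum_range_succ, hc, hsq]
      omega

lemma prod_low_le (k : ℕ) :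
    ∏ j ∈ range k, (-fct k j) ≤ 2^k * ((2:ℝ)^(k.choose 2))⁻¹ := by
  have step : ∏ j ∈ range k, (-fct k j) ≤ ∏ j ∈ range k, (2^(j+2) * ((2:ℝ)^k)⁻¹) := by
    apply Finset.prod_le_prod
    · intro j hj; have := fct_neg (mem_range.mp hj); linarith
    · intro j hj; exact neg_fct_le (mem_range.mp hj)
  refine step.trans_eq ?_
  rw [Finset.prod_mul_distrib, Finset.prod_const, Finset.card_range, ← inv_pow, ← pow_mul,
    Finset.prod_pow_eq_pow_sum]
  have hnat := natarith k
  have hpow : ((2:ℝ) ^ (∑ i ∈ range k, (i+2))) * 2^(k.choose 2) = 2^k * 2^(k*k) := by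
    rw [← pow_add, ← pow_add, hnat]
  rw [inv_pow]
  field_simp
  linear_combination hpow


lemma prod_high_le {K k : ℕ} :
    ∏ j ∈ Ico (k+1) (K+1), fct k j ≤ Real.exp 4 := by
  by_cases h : k + 1 ≤ K + 1
  case neg =>
    rw [Finset.Ico_eq_empty (by omega), Finset.prod_empty]
    have := Real.one_le_exp (x := 4) (by norm_num)
    linarith
  case pos =>
  have step : ∏ j ∈ Ico (k+1) (K+1), fct k j
      ≤ ∏ j ∈ Ico (k+1) (K+1), Real.exp (2^(k+2) * ((2:ℝ)^j)⁻¹) := by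
    apply Finset.prod_le_prod
    · intro j hj; exact le_of_lt (fct_pos (by simpa using (mem_Ico.mp hj).1))
    · intro j hj; exact fct_le_exp (by simpa using (mem_Ico.mp hj).1)
  refine step.trans ?_
  rw [← Real.exp_sum]
  apply Real.exp_le_exp.mpr
  have geo : ∑ j ∈ Ico (k+1) (K+1), ((2:ℝ)^j)⁻¹ ≤ ((2:ℝ)^k)⁻¹ := by
    have e : ∀ j : ℕ, ((2:ℝ)^j)⁻¹ = (1/2:ℝ)^j := by
      intro j; rw [div_pow, one_pow, one_div]
    simp only [e]
    rw [Finset.sum_Ico_eq_sum_range]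
    have : ∀ i : ℕ, (1/2:ℝ)^(k+1+i) = (1/2:ℝ)^(k+1) * (1/2:ℝ)^i := fun i => pow_add _ _ _
    simp only [this, ← Finset.mul_sum]
    have hgeom : ∑ i ∈ range (K+1-(k+1)), (1/2:ℝ)^i ≤ 2 := by
      have := geom_sum_eq (by norm_num : (1/2:ℝ) ≠ 1) (K+1-(k+1))
      rw [this]
      have hp : (0:ℝ) ≤ (1/2:ℝ)^(K+1-(k+1)) := by positivity
      rw [div_le_iff_of_neg (by norm_num : (1/2:ℝ) - 1 < 0)]
      linarith
    calc (1/2:ℝ)^(k+1) * ∑ i ∈ range (K+1-(k+1)), (1/2:ℝ)^i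
        ≤ (1/2:ℝ)^(k+1) * 2 := by
          apply mul_le_mul_of_nonneg_left hgeom (by positivity)
      _ = ((1/2:ℝ))^k := by
          rw [pow_succ]
          ring
  calc ∑ j ∈ Ico (k+1) (K+1), 2^(k+2) * ((2:ℝ)^j)⁻¹
      = 2^(k+2) * ∑ j ∈ Ico (k+1) (K+1), ((2:ℝ)^j)⁻¹ := by rw [Finset.mul_sum]
    _ ≤ 2^(k+2) * ((2:ℝ)^k)⁻¹ := by
        apply mul_le_mul_of_nonneg_left geo (by positivity)
    _ = 4 := by
        rw [pow_add]
        field_simp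
        norm_num


lemma M_pos (k : ℕ) : 0 < M k := by
  rw [M]; positivity

lemma W_le_M {K k : ℕ} (h : k ≤ K) : (-1:ℝ)^k * W K k ≤ M k := by
  rw [signedW h, M]
  have h1 := prod_low_le k
  have h2 := prod_high_le (K := K) (k := k)
  have hp1 : (0:ℝ) ≤ ∏ j ∈ range k, (-fct k j) :=
    Finset.prod_nonneg fun j hj => by have := fct_neg (mem_range.mp hj); linarith
  have hp2 : (0:ℝ) ≤ ∏ j ∈ Ico (k+1) (K+1), fct k j :=
    Finset.prod_nonneg fun j hj => (fct_pos (by simpa using (mem_Ico.mp hj).1)).le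
  calc (∏ j ∈ range k, (-fct k j)) * ∏ j ∈ Ico (k+1) (K+1), fct k j
      ≤ (2^k * ((2:ℝ)^(k.choose 2))⁻¹) * Real.exp 4 :=
        mul_le_mul h1 h2 hp2 (by positivity)
    _ = Real.exp 4 * ((2:ℝ)^k * ((2:ℝ)^(k.choose 2))⁻¹) := by ring

lemma W_step {K k : ℕ} (h : k ≤ K) : W (K+1) k = W K k * fct k (K+1) := by
  have hins : (range (K+1+1)).erase k = insert (K+1) ((range (K+1)).erase k) := by
    ext j
    simp only [mem_erase, mem_range, mem_insert]
    omega
  rw [W, hins, Finset.prod_insert (by simp only [mem_erase, mem_range]; omega), W]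
  ring

/-- the monotone sequence of signed weights -/
def useq (k i : ℕ) : ℝ := (-1:ℝ)^k * W (k+i) k

lemma useq_mono (k : ℕ) : Monotone (useq k) := by
  apply monotone_nat_of_le_succ
  intro i
  have hstep : W (k+i+1) k = W (k+i) k * fct k (k+i+1) := W_step (by omega)
  rw [useq, useq, show k+(i+1) = k+i+1 by ring, hstep, ← mul_assoc]
  have hpos := signedW_pos (k := k) (K := k+i) (by omega)
  have hone : 1 ≤ fct k (k+i+1) := one_le_fct (by omega)
  nlinarith

lemma useq_bdd (k : ℕ) : BddAbove (Set.range (useq k)) := by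
  refine ⟨M k, ?_⟩
  rintro x ⟨i, rfl⟩
  exact W_le_M (by omega)

/-- The limit weights. -/
def L (k : ℕ) : ℝ := ⨆ i, useq k i

def a (k : ℕ) : ℝ := (-1:ℝ)^k * L k

lemma useq_tendsto (k : ℕ) : Tendsto (useq k) atTop (𝓝 (L k)) :=
  tendsto_atTop_ciSup (useq_mono k) (useq_bdd k)

lemma L_pos (k : ℕ) : 0 < L k := by
  have h0 : useq k 0 ≤ L k := le_ciSup (useq_bdd k) 0
  have := signedW_pos (k := k) (K := k + 0) (by omega)
  rw [useq] at h0
  linarith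

lemma L_le_M (k : ℕ) : L k ≤ M k :=
  ciSup_le fun i => W_le_M (by omega)

lemma neg_one_pow_mul_a (k : ℕ) : (-1:ℝ)^k * a k = L k := by
  rw [a, ← mul_assoc, ← pow_add, Even.neg_one_pow ⟨k, rfl⟩, one_mul]

lemma abs_a (k : ℕ) : |a k| = L k := by
  rw [a, abs_mul, abs_pow, abs_neg, abs_one, one_pow, one_mul,
    abs_of_pos (L_pos k)]

lemma W_tendsto (k : ℕ) : Tendsto (fun K => W K k) atTop (𝓝 (a k)) := by
  have h1 : Tendsto (fun K : ℕ => useq k (K - k)) atTop (𝓝 (L k)) :=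
    (useq_tendsto k).comp (tendsto_sub_atTop_nat k)
  have h2 : Tendsto (fun K : ℕ => (-1:ℝ)^k * useq k (K - k)) atTop (𝓝 ((-1:ℝ)^k * L k)) :=
    h1.const_mul _
  rw [show (-1:ℝ)^k * L k = a k from rfl] at h2
  apply h2.congr'
  filter_upwards [eventually_ge_atTop k] with K hK
  rw [useq, ← mul_assoc, ← pow_add, Even.neg_one_pow ⟨k, rfl⟩, one_mul]
  congr 1
  omega


lemma M_mul_summable (n : ℕ) : Summable (fun k => M k * (2:ℝ)^(k*n)) := by
  apply summable_of_ratio_norm_eventually_le (r := 1/2) (by norm_num)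
  filter_upwards [eventually_ge_atTop (n+2)] with k hk
  have hMk : 0 < M k * (2:ℝ)^(k*n) := by have := M_pos k; positivity
  have hchoose : (k+1).choose 2 = k + k.choose 2 := by
    rw [Nat.choose_succ_succ, Nat.choose_one_right]
  have hratio : M (k+1) * (2:ℝ)^((k+1)*n)
      = (M k * (2:ℝ)^(k*n)) * ((2:ℝ)^(n+1) * ((2:ℝ)^k)⁻¹) := by
    rw [M, M, hchoose]
    rw [pow_add, pow_add, pow_add, pow_succ]
    have h1 : ((2:ℝ)^(k.choose 2)) ≠ 0 := by positivity
    have h2 : ((2:ℝ)^k) ≠ 0 := by positivity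
    field_simp
    ring
  have hle : (2:ℝ)^(n+1) * ((2:ℝ)^k)⁻¹ ≤ 1/2 := by
    have hpk : ((2:ℝ)^(n+2)) ≤ 2^k := pow_le_pow_right₀ (by norm_num) hk
    have hpk0 : (0:ℝ) < 2^k := two_pow_pos k
    rw [mul_inv_le_iff₀ hpk0]
    calc (2:ℝ)^(n+1) = (1/2) * 2^(n+2) := by ring
      _ ≤ (1/2) * 2^k := by linarith
  rw [Real.norm_eq_abs, Real.norm_eq_abs, abs_of_pos hMk, hratio,
    abs_of_pos (by positivity)]
  have : (0:ℝ) < M k * (2:ℝ)^(k*n) := hMk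
  calc M k * (2:ℝ)^(k*n) * ((2:ℝ)^(n+1) * ((2:ℝ)^k)⁻¹)
      ≤ M k * (2:ℝ)^(k*n) * (1/2) := by nlinarith
    _ = 1/2 * (M k * (2:ℝ)^(k*n)) := by ring

lemma abs_v_pow (k n : ℕ) : |v k ^ n| = (2:ℝ)^(k*n) := by
  rw [abs_pow, v, abs_neg, abs_pow, abs_two, pow_mul]

lemma abs_a_le_M (k : ℕ) : |a k| ≤ M k := by rw [abs_a]; exact L_le_M k

/-- summability of the absolute moments -/
lemma summable_abs_moment (n : ℕ) : Summable (fun k => |a k| * |v k|^n) := by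
  apply Summable.of_nonneg_of_le (fun k => by positivity)
    (fun k => ?_) (M_mul_summable n)
  have h1 : |a k| ≤ M k := abs_a_le_M k
  have h2 : |v k|^n = (2:ℝ)^(k*n) := by
    rw [v, abs_neg, abs_pow, abs_two, pow_mul]
  rw [h2]
  have := (M_pos k).le
  have : (0:ℝ) ≤ (2:ℝ)^(k*n) := by positivity
  nlinarith [abs_nonneg (a k), M_pos k]

/-- The moment identities. -/
lemma moment (n : ℕ) : ∑' k, a k * v k ^ n = 1 := by
  set F : ℕ → ℕ → ℝ := fun K k => if k ≤ K then W K k * v k ^ n else 0 with hF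
  have hbound : ∀ K, ∀ k, ‖F K k‖ ≤ M k * (2:ℝ)^(k*n) := by
    intro K k
    rw [hF]
    by_cases h : k ≤ K
    · simp only [if_pos h, Real.norm_eq_abs, abs_mul]
      have h1 : |W K k| = (-1:ℝ)^k * W K k := by
        rcases Nat.even_or_odd k with he | ho
        · rw [he.neg_one_pow, one_mul, abs_of_pos]
          have := signedW_pos h
          rw [he.neg_one_pow, one_mul] at this
          exact this
        · rw [ho.neg_one_pow, neg_one_mul, abs_of_neg]
          have := signedW_pos h
          rw [ho.neg_one_pow, neg_one_mul] at this
          linarith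
      rw [h1, abs_v_pow]
      have h2 : (-1:ℝ)^k * W K k ≤ M k := W_le_M h
      have h3 : (0:ℝ) ≤ (2:ℝ)^(k*n) := by positivity
      nlinarith [signedW_pos h]
    · simp only [if_neg h, norm_zero]
      have := M_pos k
      positivity
  have hpt : ∀ k, Tendsto (fun K => F K k) atTop (𝓝 (a k * v k ^ n)) := by
    intro k
    apply ((W_tendsto k).mul_const _).congr'
    filter_upwards [eventually_ge_atTop k] with K hK
    rw [hF]; simp [if_pos hK]
  have hlim : Tendsto (fun K => ∑' k, F K k) atTop (𝓝 (∑' k, a k * v k ^ n)) :=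
    tendsto_tsum_of_dominated_convergence (M_mul_summable n) hpt
      (Eventually.of_forall hbound)
  have heval : ∀ᶠ K in atTop, (∑' k, F K k) = 1 := by
    filter_upwards [eventually_ge_atTop n] with K hK
    have hsum : (∑' k, F K k) = ∑ k ∈ range (K+1), F K k := by
      apply tsum_eq_sum
      intro k hk
      simp only [mem_range] at hk
      show (if k ≤ K then W K k * v k ^ n else 0) = 0
      rw [if_neg (by omega)]
    rw [hsum, ← lagrange_sum hK]
    apply Finset.sum_congr rfl
    intro k hk
    simp only [mem_range] at hk
    rw [hF]
    simp only [if_pos (by omega : k ≤ K)]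
    ring
  have : Tendsto (fun _ : ℕ => (1:ℝ)) atTop (𝓝 (∑' k, a k * v k ^ n)) :=
    hlim.congr' heval
  exact tendsto_nhds_unique this tendsto_const_nhds

lemma a_sign (k : ℕ) : 0 < (-1:ℝ)^k * a k := by
  rw [neg_one_pow_mul_a]; exact L_pos k

lemma v_neg (k : ℕ) : v k < 0 := by
  rw [v]; have := two_pow_pos k; linarith

lemma v_tendsto : Tendsto v atTop atBot := by
  have h : Tendsto (fun k : ℕ => (2:ℝ)^k) atTop atTop :=
    tendsto_pow_atTop_atTop_of_one_lt (by norm_num)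
  have hneg := tendsto_neg_atTop_atBot.comp h
  exact hneg.congr fun k => rfl

end SeeleyAux
end

open Filter Topology Set

lemma iteratedDeriv_zero_fun' (n : ℕ) : iteratedDeriv n (fun _ : ℝ => (0:ℝ)) = fun _ => 0 := by
  induction n with
  | zero => rw [iteratedDeriv_zero]
  | succ n ih => rw [iteratedDeriv_succ, ih]; funext x; simp

lemma seeley_analysis (a b : ℕ → ℝ) (hbneg : ∀ k, b k < 0)
    (hsum : ∀ n : ℕ, Summable fun k => |a k| * |b k| ^ n)
    (hmom : ∀ n : ℕ, ∑' k, a k * b k ^ n = 1) (m : ℕ) :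
    ∃ C : ℝ, 0 < C ∧
      ∀ φ : ℝ → ℝ, ContDiff ℝ (⊤ : ℕ∞) φ → (∀ l : ℝ, l ≤ 1 → φ l = 1) →
        (∀ l : ℝ, 2 ≤ l → φ l = 0) →
      ∀ f : ℝ → ℝ, ContDiff ℝ (m : ℕ∞) f → (∀ s : ℝ, 1 / 2 ≤ s → f s = 0) →
      ∀ g : ℝ → ℝ,
        (∀ s : ℝ, s ≤ 0 → g s = ∑' k, a k * φ (b k * s) * f (b k * s)) →
        (∀ s : ℝ, 0 ≤ s → g s = f s) →
        ContDiffOn ℝ (m : ℕ∞) g (Set.Ioo (-1 : ℝ) 2) ∧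
        ∀ B : ℝ, (∀ j ≤ m, ∀ t ∈ Set.Icc (0 : ℝ) 1, |iteratedDeriv j f t| ≤ B) →
          ∀ i ≤ m, ∀ s ∈ Set.Icc (-1 : ℝ) 2, |iteratedDeriv i g s| ≤ C * B := by
  classical
  set S : ℕ → ℝ := fun i => ∑' k, |a k| * |b k| ^ i with hS
  have hS0 : ∀ i, 0 ≤ S i := fun i => tsum_nonneg fun k => by positivity
  set C : ℝ := 1 + ∑ i ∈ Finset.range (m+1), S i with hC
  have hC1 : 1 ≤ C := by
    have : 0 ≤ ∑ i ∈ Finset.range (m+1), S i :=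
      Finset.sum_nonneg fun i _ => hS0 i
    simp only [hC]; linarith
  have hCpos : 0 < C := by linarith
  have hSC : ∀ i ≤ m, S i ≤ C := by
    intro i hi
    have : S i ≤ ∑ j ∈ Finset.range (m+1), S j :=
      Finset.single_le_sum (fun j _ => hS0 j) (Finset.mem_range.mpr (by omega))
    simp only [hC]; linarith
  refine ⟨C, hCpos, ?_⟩
  intro φ hφ hφ1 hφ0 f hf hfvan g hg1 hg2
  set D : ℕ → ℝ → ℝ := fun i => iteratedDeriv i f with hD
  -- basic facts about f
  have hDcont : ∀ i ≤ m, Continuous (D i) := fun i hi =>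
    hf.continuous_iteratedDeriv i (by exact_mod_cast hi)
  have hD0 : ∀ (i : ℕ) (t : ℝ), 1/2 < t → D i t = 0 := by
    intro i t ht
    have hmem : Ioi (1/2 : ℝ) ∈ 𝓝 t := Ioi_mem_nhds ht
    have hfg : f =ᶠ[𝓝 t] (fun _ => 0) :=
      Filter.eventuallyEq_of_mem hmem fun y hy => hfvan y (le_of_lt hy)
    have h1 := hfg.iteratedDeriv_eq i
    show iteratedDeriv i f t = 0
    rw [h1, iteratedDeriv_zero_fun' i]
  have hDiff : ∀ i < m, ∀ t : ℝ, HasDerivAt (D i) (D (i+1) t) t := by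
    intro i hi t
    have hdiff : Differentiable ℝ (D i) :=
      hf.differentiable_iteratedDeriv i (by exact_mod_cast hi)
    have h1 := (hdiff t).hasDerivAt
    have h2 : deriv (D i) = D (i+1) := (iteratedDeriv_succ (n := i) (f := f)).symm
    rw [← h2]; exact h1
  -- uniform bounds for D i on [0,∞)
  have hBd : ∀ i : ℕ, ∃ Q : ℝ, 0 ≤ Q ∧ (i ≤ m → ∀ t : ℝ, 0 ≤ t → |D i t| ≤ Q) := by
    intro i
    by_cases hi : i ≤ m
    · obtain ⟨Q₀, hQ₀⟩ := isCompact_Icc.exists_bound_of_continuousOn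
        (s := Icc (0:ℝ) 1) ((hDcont i hi).continuousOn)
      refine ⟨max Q₀ 0, le_max_right _ _, fun _ t ht => ?_⟩
      by_cases ht1 : t ≤ 1
      · exact le_trans (by simpa using hQ₀ t ⟨ht, ht1⟩) (le_max_left _ _)
      · rw [hD0 i t (by linarith)]
        simpa using le_max_right Q₀ 0
    · exact ⟨0, le_rfl, fun h => absurd h hi⟩
  choose Q hQ0 hQ using hBd
  -- sign facts
  have hbs : ∀ (k : ℕ) (s : ℝ), s ≤ 0 → 0 ≤ b k * s :=
    fun k s hs => mul_nonneg_of_nonpos_of_nonpos (hbneg k).le hs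
  have habs : ∀ (k : ℕ) (i : ℕ) (x : ℝ), |a k * b k ^ i * x| = |a k| * |b k| ^ i * |x| := by
    intro k i x; rw [abs_mul, abs_mul, abs_pow]
  -- the series of i-th derivatives
  set SF : ℕ → ℝ → ℝ := fun i s => ∑' k, a k * b k ^ i * D i (b k * s) with hSF
  have htermbd : ∀ i ≤ m, ∀ (k : ℕ) (s : ℝ), s ≤ 0 →
      ‖a k * b k ^ i * D i (b k * s)‖ ≤ |a k| * |b k| ^ i * Q i := by
    intro i hi k s hs
    rw [Real.norm_eq_abs, habs]
    have h1 : |D i (b k * s)| ≤ Q i := hQ i hi _ (hbs k s hs)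
    have h2 : (0:ℝ) ≤ |a k| * |b k| ^ i := by positivity
    exact mul_le_mul_of_nonneg_left h1 h2
  have hsummQ : ∀ i : ℕ, Summable fun k => |a k| * |b k| ^ i * Q i :=
    fun i => (hsum i).mul_right (Q i)
  have hSFcont : ∀ i ≤ m, ContinuousOn (SF i) (Iic 0) := by
    intro i hi
    apply continuousOn_tsum (u := fun k => |a k| * |b k| ^ i * Q i)
    · intro k
      exact (continuous_const.mul ((hDcont i hi).comp
        (continuous_const.mul continuous_id))).continuousOn
    · exact hsummQ i
    · intro k s hs
      exact htermbd i hi k s hs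
  have hSFderiv : ∀ i < m, ∀ s : ℝ, s < 0 → HasDerivAt (SF i) (SF (i+1) s) s := by
    intro i hi s hs
    have hterm : ∀ (k : ℕ) (y : ℝ), y ∈ Iio (0:ℝ) →
        HasDerivAt (fun s : ℝ => a k * b k ^ i * D i (b k * s))
          (a k * b k ^ (i+1) * D (i+1) (b k * y)) y := by
      intro k y _
      have h1 : HasDerivAt (fun s : ℝ => b k * s) (b k) y := by
        simpa using (hasDerivAt_id y).const_mul (b k)
      have h2 : HasDerivAt (fun s : ℝ => D i (b k * s)) (D (i+1) (b k * y) * b k) y :=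
        (hDiff i hi (b k * y)).comp y h1
      have h3 := h2.const_mul (a k * b k ^ i)
      exact h3.congr_deriv (by ring)
    have hbd : ∀ (k : ℕ) (y : ℝ), y ∈ Iio (0:ℝ) →
        ‖a k * b k ^ (i+1) * D (i+1) (b k * y)‖ ≤ |a k| * |b k| ^ (i+1) * Q (i+1) :=
      fun k y hy => htermbd (i+1) (by omega) k y (le_of_lt hy)
    have hsum0 : Summable fun k => a k * b k ^ i * D i (b k * (-1:ℝ)) := by
      apply Summable.of_norm_bounded (hsummQ i)
      intro k
      exact htermbd i (by omega) k (-1) (by norm_num)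
    exact hasDerivAt_tsum_of_isPreconnected (hsummQ (i+1)) isOpen_Iio
      (convex_Iio (0:ℝ)).isPreconnected hterm hbd (by norm_num : (-1:ℝ) ∈ Iio 0) hsum0 hs
  -- value of the series at the matching point
  have hSF0 : ∀ i : ℕ, SF i 0 = D i 0 := by
    intro i
    have e1 : SF i 0 = ∑' k, (a k * b k ^ i) * D i 0 := by
      apply tsum_congr; intro k; rw [mul_zero]
    rw [e1, tsum_mul_right, hmom i, one_mul]
  -- the glued candidate derivatives
  set G : ℕ → ℝ → ℝ := fun i s => if s ≤ 0 then SF i s else D i s with hG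
  have hGIic : ∀ (i : ℕ) (s : ℝ), s ≤ 0 → G i s = SF i s := by
    intro i s hs; simp only [hG, if_pos hs]
  have hGIci : ∀ (i : ℕ) (s : ℝ), 0 ≤ s → G i s = D i s := by
    intro i s hs
    rcases eq_or_lt_of_le hs with h | h
    · simp only [hG, ← h, if_pos le_rfl, hSF0 i]
    · simp only [hG, if_neg (not_le.mpr h)]
  have hGcont0 : ∀ i ≤ m, ContinuousAt (G i) 0 := by
    intro i hi
    have hleft : ContinuousWithinAt (G i) (Iic 0) 0 := by
      apply ((hSFcont i hi) 0 (le_rfl : (0:ℝ) ≤ 0)).congr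
      · intro y hy; exact hGIic i y hy
      · exact hGIic i 0 le_rfl
    have hright : ContinuousWithinAt (G i) (Ici 0) 0 := by
      apply ((hDcont i hi).continuousAt.continuousWithinAt).congr
      · intro y hy; exact hGIci i y hy
      · exact hGIci i 0 le_rfl
    have := hleft.union hright
    rwa [Iic_union_Ici, continuousWithinAt_univ] at this
  have hGcont : ∀ i ≤ m, ∀ s : ℝ, ContinuousAt (G i) s := by
    intro i hi s
    rcases lt_trichotomy s 0 with h | h | h
    · have h1 : ContinuousAt (SF i) s :=
        ((hSFcont i hi) s (le_of_lt h)).continuousAt (Iic_mem_nhds h)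
      apply h1.congr
      filter_upwards [Iio_mem_nhds h] with y hy
      exact (hGIic i y (le_of_lt hy)).symm
    · rw [h]; exact hGcont0 i hi
    · apply (hDcont i hi).continuousAt.congr
      filter_upwards [Ioi_mem_nhds h] with y hy
      exact (hGIci i y (le_of_lt hy)).symm
  have hGderiv : ∀ i < m, ∀ s : ℝ, HasDerivAt (G i) (G (i+1) s) s := by
    intro i hi
    have hne : ∀ y : ℝ, y ≠ 0 → HasDerivAt (G i) (G (i+1) y) y := by
      intro y hy
      rcases hy.lt_or_gt with h | h
      · have h1 : HasDerivAt (SF i) (SF (i+1) y) y := hSFderiv i hi y h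
        have h2 : G i =ᶠ[𝓝 y] SF i := by
          filter_upwards [Iio_mem_nhds h] with z hz
          exact hGIic i z (le_of_lt hz)
        rw [hGIic (i+1) y (le_of_lt h)]
        exact h1.congr_of_eventuallyEq h2
      · have h1 : HasDerivAt (D i) (D (i+1) y) y := hDiff i hi y
        have h2 : G i =ᶠ[𝓝 y] D i := by
          filter_upwards [Ioi_mem_nhds h] with z hz
          exact hGIci i z (le_of_lt hz)
        rw [hGIci (i+1) y (le_of_lt h)]
        exact h1.congr_of_eventuallyEq h2
    intro s
    rcases eq_or_ne s 0 with rfl | hs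
    · exact hasDerivAt_of_hasDerivAt_of_ne hne (hGcont i (by omega) 0)
        (hGcont (i+1) (by omega) 0)
    · exact hne s hs
  have hderivG : ∀ i < m, deriv (G i) = G (i+1) := by
    intro i hi
    funext s
    exact (hGderiv i hi s).deriv
  -- smoothness by downward induction
  have hGsmooth : ∀ j : ℕ, j ≤ m → ContDiff ℝ (j : ℕ∞) (G (m - j)) := by
    intro j
    induction j with
    | zero =>
        intro _
        rw [Nat.cast_zero, Nat.sub_zero]
        exact contDiff_zero.mpr (continuous_iff_continuousAt.mpr (hGcont m le_rfl))
    | succ j ih =>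
        intro hj
        have hlt : m - (j+1) < m := by omega
        have hsucc : m - (j+1) + 1 = m - j := by omega
        have hdiffable : Differentiable ℝ (G (m - (j+1))) :=
          fun s => (hGderiv _ hlt s).differentiableAt
        have hderiv' : ContDiff ℝ (j : ℕ∞) (deriv (G (m - (j+1)))) := by
          rw [hderivG _ hlt, hsucc]
          exact ih (by omega)
        have : ContDiff ℝ ((j : ℕ∞) + 1) (G (m - (j+1))) := by
          apply contDiff_succ_iff_deriv.mpr
          refine ⟨hdiffable, ?_, hderiv'⟩
          intro h
          exfalso
          exact (by simp : ((j:ℕ∞) : WithTop ℕ∞) ≠ ⊤) (by exact_mod_cast h)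
        have hcast : ((j+1 : ℕ) : ℕ∞) = (j : ℕ∞) + 1 := by push_cast; ring
        rw [hcast]
        exact this
  -- identification of G 0 with g
  have hGg : ∀ s : ℝ, g s = G 0 s := by
    intro s
    rcases le_or_gt s 0 with hs | hs
    · rw [hGIic 0 s hs, hg1 s hs]
      apply tsum_congr
      intro k
      have hD00 : D 0 = f := iteratedDeriv_zero
      rw [hD00, pow_zero, mul_one]
      by_cases hbk : b k * s ≤ 1
      · rw [hφ1 _ hbk, mul_one]
      · push_neg at hbk
        rw [hfvan (b k * s) (by linarith), mul_zero, mul_zero]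
    · rw [hGIci 0 s (le_of_lt hs), hg2 s (le_of_lt hs)]
      show f s = D 0 s
      rw [show D 0 = f from iteratedDeriv_zero]
  have hgG : g = G 0 := funext hGg
  have hsmooth : ContDiff ℝ (m : ℕ∞) g := by
    have := hGsmooth m le_rfl
    rw [Nat.sub_self] at this
    rwa [hgG]
  constructor
  · exact hsmooth.contDiffOn
  -- the uniform bound
  have hiter : ∀ i ≤ m, iteratedDeriv i g = G i := by
    intro i
    induction i with
    | zero => intro _; rw [iteratedDeriv_zero, hgG]
    | succ i ih =>
        intro hi
        rw [iteratedDeriv_succ, ih (by omega), hderivG i (by omega)]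
  intro B hB i hi s hs
  have hB0 : 0 ≤ B := by
    have := hB 0 (by omega) 0 ⟨le_rfl, by norm_num⟩
    exact le_trans (abs_nonneg _) this
  have hDB : ∀ j ≤ m, ∀ t : ℝ, 0 ≤ t → |D j t| ≤ B := by
    intro j hj t ht
    by_cases ht1 : t ≤ 1
    · exact hB j hj t ⟨ht, ht1⟩
    · rw [hD0 j t (by linarith)]; simpa using hB0
  rw [hiter i hi]
  rcases le_or_gt s 0 with hsle | hsgt
  · rw [hGIic i s hsle]
    have hnorm : ∀ k, ‖a k * b k ^ i * D i (b k * s)‖ ≤ |a k| * |b k| ^ i * B := by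
      intro k
      rw [Real.norm_eq_abs, habs]
      exact mul_le_mul_of_nonneg_left (hDB i hi _ (hbs k s hsle)) (by positivity)
    have hsumm : Summable fun k => ‖a k * b k ^ i * D i (b k * s)‖ :=
      Summable.of_nonneg_of_le (fun k => norm_nonneg _) hnorm ((hsum i).mul_right B)
    calc |SF i s| ≤ ∑' k, ‖a k * b k ^ i * D i (b k * s)‖ := by
          rw [← Real.norm_eq_abs]
          exact norm_tsum_le_tsum_norm hsumm
      _ ≤ ∑' k, |a k| * |b k| ^ i * B :=
          Summable.tsum_le_tsum hnorm hsumm ((hsum i).mul_right B)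
      _ = S i * B := tsum_mul_right
      _ ≤ C * B := mul_le_mul_of_nonneg_right (hSC i hi) hB0
  · rw [hGIci i s (le_of_lt hsgt)]
    calc |D i s| ≤ B := hDB i hi s (le_of_lt hsgt)
      _ = 1 * B := (one_mul B).symm
      _ ≤ C * B := mul_le_mul_of_nonneg_right hC1 hB0

/-- Seeley extension: there exist sequences `(a_k)`, `(b_k)` with `b_k < 0`, `b_k → −∞`,
`(−1)^k a_k > 0`, `Σ |a_k||b_k|^n < ∞` and `Σ a_k b_k^n = 1` for every `n`; consequently,
with a cutoff `φ` (`φ = 1` on `(−∞,1]`, `φ = 0` on `[2,∞)`), the operator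
`(Ef)(s) = Σ a_k φ(b_k s) f(b_k s)` for `s ≤ 0` (and `Ef = f` for `s ≥ 0`), applied to `C^m`
functions vanishing near `1/2`, gives a `C^m` extension to `[−1, 2]` with norm bounded by a
constant depending only on `m`. -/
theorem seeley_extension :
    ∃ a b : ℕ → ℝ,
      (∀ k, b k < 0) ∧ Filter.Tendsto b Filter.atTop Filter.atBot ∧
      (∀ k, 0 < (-1 : ℝ) ^ k * a k) ∧
      (∀ n : ℕ, Summable fun k => |a k| * |b k| ^ n) ∧
      (∀ n : ℕ, ∑' k, a k * b k ^ n = 1) ∧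
      ∀ m : ℕ, ∃ C : ℝ, 0 < C ∧
        ∀ φ : ℝ → ℝ, ContDiff ℝ (⊤ : ℕ∞) φ → (∀ l : ℝ, l ≤ 1 → φ l = 1) →
          (∀ l : ℝ, 2 ≤ l → φ l = 0) →
        ∀ f : ℝ → ℝ, ContDiff ℝ (m : ℕ∞) f → (∀ s : ℝ, 1 / 2 ≤ s → f s = 0) →
        ∀ g : ℝ → ℝ,
          (∀ s : ℝ, s ≤ 0 → g s = ∑' k, a k * φ (b k * s) * f (b k * s)) →
          (∀ s : ℝ, 0 ≤ s → g s = f s) →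
          ContDiffOn ℝ (m : ℕ∞) g (Set.Ioo (-1 : ℝ) 2) ∧
          ∀ B : ℝ, (∀ j ≤ m, ∀ t ∈ Set.Icc (0 : ℝ) 1, |iteratedDeriv j f t| ≤ B) →
            ∀ i ≤ m, ∀ s ∈ Set.Icc (-1 : ℝ) 2, |iteratedDeriv i g s| ≤ C * B := by
  exact ⟨SeeleyAux.a, SeeleyAux.v, SeeleyAux.v_neg, SeeleyAux.v_tendsto, SeeleyAux.a_sign,
    SeeleyAux.summable_abs_moment, SeeleyAux.moment,
    fun m => seeley_analysis SeeleyAux.a SeeleyAux.v SeeleyAux.v_neg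
      SeeleyAux.summable_abs_moment SeeleyAux.moment m⟩
end
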